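/- Every adjoint pair (F,G) between abelian categories A and B, with unit η:1_A→GF and counit ε:FG→1_B, induces a Galois connection (φ,ψ) between the ordered collections of preradicals Pr(A) and Pr(B), where φ(τ) = Im(ε ∘ FτG) and ψ(σ) = Ker(Gσ*F ∘ η). -/

import Mathlib

open CategoryTheory CategoryTheory.Limits

universe v₁ v₂ u₁ u₂

variable {A : Type u₁} [Category.{v₁} A] [Abelian A]
variable {B : Type u₂} [Category.{v₂} B] [Abelian B]
variable (F : A ⥤ B) (G : B ⥤ A) (adj : F ⊣ G)

/-- `φ(τ) = Im(ε ∘ FτG)`. -/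
noncomputable def preradPhi (τ : Subobject (𝟭 A)) : Subobject (𝟭 B) :=
  imageSubobject
    ((Functor.whiskerRight (Functor.whiskerLeft G τ.arrow) F ≫ adj.counit :
      (G ⋙ (τ : A ⥤ A)) ⋙ F ⟶ 𝟭 B))

/-- `ψ(σ) = Ker(Gσ*F ∘ η)`. -/
noncomputable def preradPsi (σ : Subobject (𝟭 B)) : Subobject (𝟭 A) :=
  kernelSubobject
    ((adj.unit ≫ Functor.whiskerRight (Functor.whiskerLeft F (cokernel.π σ.arrow)) G :
      𝟭 A ⟶ (F ⋙ cokernel σ.arrow) ⋙ G))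

/-!
Both `φ τ ≤ σ` and `τ ≤ ψ σ` are equivalent to the vanishing of `F(τ_X) ≫ σ*_{FX}` for all `X`.
For `ψ` this is the adjunction transpose of `τ_X ≫ η_X ≫ G(σ*_{FX})`. For `φ`, the condition
`F(τ_{GY}) ≫ ε_Y ≫ σ*_Y = 0` follows from it at `X = GY` by naturality of `σ*`, and conversely
implies it at `Y = FX` after precomposing with `F(T η_X)`, by naturality of `τ` and the triangle
identity. Hence `(φ, ψ)` is a Galois connection.
-/

namespace CategoryTheory

theorem le_kernelSubobject_iff {C : Type*} [Category C] [HasZeroMorphisms C] {X Y : C}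
    (f : X ⟶ Y) [HasKernel f] (S : Subobject X) :
    S ≤ kernelSubobject f ↔ S.arrow ≫ f = 0 :=
  ⟨fun h => by rw [← Subobject.ofLE_arrow h, Category.assoc, kernelSubobject_arrow_comp,
    comp_zero], le_kernelSubobject f S⟩

theorem imageSubobject_le_iff_comp_cokernel_π_eq_zero {C : Type*} [Category C] [Abelian C]
    {X Y : C} (f : X ⟶ Y) (S : Subobject Y) :
    imageSubobject f ≤ S ↔ f ≫ cokernel.π S.arrow = 0 := by
  refine ⟨fun h => ?_, fun h => imageSubobject_le f _ (Abelian.monoLift_comp _ f h)⟩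
  rw [← imageSubobject_arrow_comp f, ← Subobject.ofLE_arrow h]
  simp only [Category.assoc, cokernel.condition, comp_zero]

namespace Adjunction

variable {C D : Type*} [Category C] [Category D] {F : C ⥤ D} {G : D ⥤ C} (adj : F ⊣ G)

theorem comp_unit_app_comp_map_eq_zero_iff [HasZeroMorphisms C] [HasZeroMorphisms D]
    {X' X : C} {Y : D} (f : X' ⟶ X) (g : F.obj X ⟶ Y) :
    f ≫ adj.unit.app X ≫ G.map g = 0 ↔ F.map f ≫ g = 0 := by
  have := adj.isRightAdjoint
  rw [← homEquiv_unit, ← homEquiv_naturality_left, ← (adj.homEquiv X' Y).apply_eq_iff_eq,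
    homEquiv_unit, homEquiv_unit, G.map_zero, comp_zero]

theorem forall_map_app_comp_counit_app_comp_eq_zero_iff [HasZeroMorphisms D] {T : C ⥤ C}
    {S : D ⥤ D} (α : T ⟶ 𝟭 C) (β : 𝟭 D ⟶ S) :
    (∀ Y, F.map (α.app (G.obj Y)) ≫ adj.counit.app Y ≫ β.app Y = 0) ↔
      ∀ X, F.map (α.app X) ≫ β.app (F.obj X) = 0 := by
  refine ⟨fun h X => ?_, fun h Y => ?_⟩
  · calc F.map (α.app X) ≫ β.app (F.obj X)
        = F.map (α.app X ≫ adj.unit.app X) ≫ adj.counit.app (F.obj X) ≫ β.app (F.obj X) := by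
          simp
      _ = F.map (T.map (adj.unit.app X)) ≫ F.map (α.app (G.obj (F.obj X))) ≫
            adj.counit.app (F.obj X) ≫ β.app (F.obj X) := by
          rw [← F.map_comp_assoc]
          exact congrArg (fun k => F.map k ≫ _) (α.naturality _).symm
      _ = 0 := by rw [h, comp_zero]
  · calc F.map (α.app (G.obj Y)) ≫ adj.counit.app Y ≫ β.app Y
        = (F.map (α.app (G.obj Y)) ≫ β.app (F.obj (G.obj Y))) ≫ S.map (adj.counit.app Y) := by
          rw [Category.assoc, ← β.naturality]; rfl
      _ = 0 := by rw [h, zero_comp]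

end Adjunction

end CategoryTheory

theorem le_preradPsi_iff (τ : Subobject (𝟭 A)) (σ : Subobject (𝟭 B)) :
    τ ≤ preradPsi F G adj σ ↔
      ∀ X, F.map (τ.arrow.app X) ≫ (cokernel.π σ.arrow).app (F.obj X) = 0 := by
  rw [preradPsi, le_kernelSubobject_iff, NatTrans.ext_iff, funext_iff]
  exact forall_congr' fun X => adj.comp_unit_app_comp_map_eq_zero_iff _ _

omit [Abelian A] in
theorem preradPhi_le_iff (τ : Subobject (𝟭 A)) (σ : Subobject (𝟭 B)) :
    preradPhi F G adj τ ≤ σ ↔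
      ∀ X, F.map (τ.arrow.app X) ≫ (cokernel.π σ.arrow).app (F.obj X) = 0 := by
  rw [preradPhi, imageSubobject_le_iff_comp_cokernel_π_eq_zero, NatTrans.ext_iff, funext_iff]
  simp only [NatTrans.comp_app, Functor.whiskerRight_app, Functor.whiskerLeft_app, zero_app,
    Category.assoc]
  exact adj.forall_map_app_comp_counit_app_comp_eq_zero_iff _ _

theorem gc_preradPhi_preradPsi : GaloisConnection (preradPhi F G adj) (preradPsi F G adj) :=
  fun τ σ => (preradPhi_le_iff F G adj τ σ).trans (le_preradPsi_iff F G adj τ σ).symm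

/-- An adjoint pair between abelian categories induces a Galois connection between
the collections of preradicals. -/
theorem adjunction_induces_galois_connection_on_preradicals :
    Monotone (preradPhi F G adj) ∧ Monotone (preradPsi F G adj) ∧
      (∀ τ : Subobject (𝟭 A), τ ≤ preradPsi F G adj (preradPhi F G adj τ)) ∧
      (∀ σ : Subobject (𝟭 B), preradPhi F G adj (preradPsi F G adj σ) ≤ σ) :=
  let gc := gc_preradPhi_preradPsi F G adj
  ⟨gc.monotone_l, gc.monotone_u, gc.le_u_l, gc.l_u_le⟩
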